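/- For all nonnegative integers t, α and all n ≥ 0: if t is odd and n is a triangular number (i.e., n = k(k+1)/2 for some nonnegative integer k), then p̄_t(2^{2α+3}·n + 2^{2α}) ≡ 2 (mod 4); otherwise p̄_t(2^{2α+3}·n + 2^{2α}) ≡ 0 (mod 4). -/

import Mathlib

/-- The number of overpartitions of `n`: a partition of `n` together with a
choice of which distinct part values are overlined (the first occurrence of a
part value may be overlined), so that the count is `∑_{λ ⊢ n} 2^{#distinct parts of λ}`. -/
def overpartitionCount (n : ℕ) : ℕ :=
  ∑ p : n.Partition, 2 ^ p.parts.toFinset.card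

/-- The number of overpartition `t`-tuples of `n`: `t`-tuples of overpartitions
whose sizes sum to `n`. -/
def overpartitionTuples (t n : ℕ) : ℕ :=
  ∑ c ∈ Finset.Nat.antidiagonalTuple t n, ∏ i, overpartitionCount (c i)

/-!
Modulo 4, a tuple of overpartitions with two nonempty components contributes `0`, since every
`p̄(m)` with `m ≠ 0` is even; hence `p̄_t(N) ≡ t p̄(N)`. In `p̄(N) = ∑_{λ ⊢ N} 2^{#distinct parts}`
only the partitions of `N` into equal parts survive, and these correspond to the divisors of `N`,
so `p̄(N) ≡ 2 d(N)`. Pairing `d` with `N / d` shows that `d(N)` is odd exactly when `N` is a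
square, and `N = 4^α (8n + 1)` is a square exactly when `8n + 1` is, i.e. when `n` is triangular.
-/

open Finset

namespace Nat

lemma even_card_divisors_filter_mul_self_ne {n : ℕ} (hn : n ≠ 0) :
    Even #{d ∈ n.divisors | d * d ≠ n} := by
  rw [← ZMod.natCast_eq_zero_iff_even, card_eq_sum_ones, Nat.cast_sum, Nat.cast_one]
  refine sum_involution (fun d _ => n / d) (fun _ _ => by decide) (fun d hd _ h => ?_)
    (fun d hd => ?_) (fun d hd => ?_) <;>
  simp only [mem_filter, mem_divisors] at hd
  · exact hd.2 (by nth_rw 2 [← h]; exact Nat.mul_div_cancel' hd.1.1)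
  · simp only [mem_filter, mem_divisors]
    refine ⟨⟨Nat.div_dvd_of_dvd hd.1.1, hn⟩, fun h => hd.2 ?_⟩
    obtain ⟨q, hq⟩ := hd.1.1
    have hd0 : 0 < d := Nat.pos_of_dvd_of_pos ⟨q, hq⟩ (Nat.pos_of_ne_zero hn)
    have hq0 : 0 < q := Nat.pos_of_mul_pos_left (hq ▸ Nat.pos_of_ne_zero hn)
    rw [hq, Nat.mul_div_cancel_left _ hd0] at h
    rw [hq, Nat.eq_of_mul_eq_mul_right hq0 h]
  · exact Nat.div_div_self hd.1.1 hn

lemma odd_card_divisors_filter_mul_self_eq_iff {n : ℕ} (hn : n ≠ 0) :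
    Odd #{d ∈ n.divisors | d * d = n} ↔ IsSquare n := by
  constructor
  · intro h
    obtain ⟨r, hr⟩ := Finset.card_pos.1 h.pos
    exact ⟨r, (mem_filter.1 hr).2.symm⟩
  · rintro ⟨r, rfl⟩
    have : {d ∈ (r * r).divisors | d * d = r * r} = {r} := by
      ext d
      simp only [mem_filter, mem_divisors, Nat.mul_self_inj, mem_singleton]
      exact ⟨And.right, fun h => ⟨⟨h ▸ Nat.dvd_mul_right r r, hn⟩, h⟩⟩
    simp [this]

theorem odd_card_divisors_iff {n : ℕ} (hn : n ≠ 0) : Odd #n.divisors ↔ IsSquare n := by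
  rw [← card_filter_add_card_filter_not (p := fun d => d * d = n), Nat.odd_add,
    iff_true_intro (even_card_divisors_filter_mul_self_ne hn), iff_true,
    odd_card_divisors_filter_mul_self_eq_iff hn]

lemma isSquare_mul_self_mul_iff {a b : ℕ} (ha : a ≠ 0) :
    IsSquare (a * a * b) ↔ IsSquare b := by
  constructor
  · rintro ⟨c, hc⟩
    obtain ⟨e, rfl⟩ : a ∣ c := (Nat.pow_dvd_pow_iff two_ne_zero).1 ⟨b, by rw [sq, sq, hc]⟩
    exact ⟨e, Nat.eq_of_mul_eq_mul_left (mul_self_pos.2 ha) (by rw [hc]; ring)⟩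
  · rintro ⟨e, rfl⟩
    exact ⟨a * e, by ring⟩

lemma isSquare_eight_mul_add_one_iff (n : ℕ) :
    IsSquare (8 * n + 1) ↔ ∃ k, n = k * (k + 1) / 2 := by
  constructor
  · rintro ⟨r, hr⟩
    have hodd : Odd (r * r) := hr ▸ ⟨4 * n, by ring⟩
    obtain ⟨k, rfl⟩ := (Nat.odd_mul.1 hodd).1
    have : k * (k + 1) = 2 * n := by linarith
    exact ⟨k, by omega⟩
  · rintro ⟨k, rfl⟩
    obtain ⟨m, hm⟩ := Nat.even_mul_succ_self k
    refine ⟨2 * k + 1, ?_⟩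
    rw [hm, show (m + m) / 2 = m by omega]
    linarith

lemma two_mul_modEq_four_of_odd {m : ℕ} (h : Odd m) : 2 * m ≡ 2 [MOD 4] :=
  Nat.ModEq.mul_left' 2 (show m ≡ 1 [MOD 2] from Nat.odd_iff.1 h)

lemma two_mul_modEq_four_of_even {m : ℕ} (h : Even m) : 2 * m ≡ 0 [MOD 4] :=
  Nat.ModEq.mul_left' 2 (show m ≡ 0 [MOD 2] from Nat.even_iff.1 h)

end Nat

section TupleSum

variable {R : Type*} [CommSemiring R] {f : ℕ → R}

lemma prod_comp_eq_zero_of_ne_zero_of_ne_zero {ι : Type*} [Fintype ι] [DecidableEq ι]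
    (hf : ∀ a b, a ≠ 0 → b ≠ 0 → f a * f b = 0) {c : ι → ℕ} {i j : ι} (hij : i ≠ j)
    (hi : c i ≠ 0) (hj : c j ≠ 0) : ∏ k, f (c k) = 0 := by
  rw [← mul_prod_erase univ _ (mem_univ i), ← zero_dvd_iff, ← hf _ _ hi hj]
  exact mul_dvd_mul_left _ (dvd_prod_of_mem _ (mem_erase.2 ⟨hij.symm, mem_univ j⟩))

lemma exists_ne_ne_zero_of_mem_antidiagonalTuple {t N : ℕ} {c : Fin t → ℕ}
    (hc : c ∈ Nat.antidiagonalTuple t N) (hN : N ≠ 0)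
    (hsingle : ∀ i, c ≠ Pi.single i N) : ∃ i j, i ≠ j ∧ c i ≠ 0 ∧ c j ≠ 0 := by
  rw [Nat.mem_antidiagonalTuple] at hc
  obtain ⟨i, -, hi⟩ := exists_ne_zero_of_sum_ne_zero (hc.symm ▸ hN)
  by_contra! h
  have hzero : ∀ j, j ≠ i → c j = 0 := fun j hji => h i j hji.symm hi
  refine hsingle i (funext fun j => ?_)
  rcases eq_or_ne j i with rfl | hji
  · rw [Pi.single_eq_same, ← hc, Fintype.sum_eq_single j hzero]
  · rw [Pi.single_eq_of_ne hji, hzero j hji]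

theorem sum_antidiagonalTuple_prod_eq_nsmul (hf0 : f 0 = 1)
    (hf : ∀ a b, a ≠ 0 → b ≠ 0 → f a * f b = 0) (t : ℕ) {N : ℕ} (hN : N ≠ 0) :
    ∑ c ∈ Nat.antidiagonalTuple t N, ∏ i, f (c i) = t • f N := by
  classical
  have hsub : univ.image (Pi.single · N) ⊆ Nat.antidiagonalTuple t N := by
    simp [subset_iff, Nat.mem_antidiagonalTuple]
  rw [← sum_subset hsub fun c hc hc' => ?_, sum_image fun i _ j _ hij => ?_]
  · have hprod (i : Fin t) : ∏ k, f ((Pi.single i N : Fin t → ℕ) k) = f N := by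
      rw [Fintype.prod_eq_single i fun k hk => by rw [Pi.single_eq_of_ne hk, hf0],
        Pi.single_eq_same]
    simp [hprod]
  · by_contra hne
    simpa [hne, hN] using congrFun hij i
  · obtain ⟨i, j, hij, hi, hj⟩ := exists_ne_ne_zero_of_mem_antidiagonalTuple hc hN
      fun i h => hc' (mem_image.2 ⟨i, mem_univ _, h.symm⟩)
    exact prod_comp_eq_zero_of_ne_zero_of_ne_zero hf hij hi hj

end TupleSum

namespace Nat.Partition

def ofDivisor {n d : ℕ} (hd : d ∈ n.divisors) : n.Partition where
  parts := Multiset.replicate (n / d) d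
  parts_pos hi := Multiset.eq_of_mem_replicate hi ▸ Nat.pos_of_mem_divisors hd
  parts_sum := by
    rw [Multiset.sum_replicate, smul_eq_mul, Nat.div_mul_cancel (Nat.dvd_of_mem_divisors hd)]

lemma ofDivisor_parts_toFinset {n d : ℕ} (hd : d ∈ n.divisors) :
    (ofDivisor hd).parts.toFinset = {d} := by
  have : n / d ≠ 0 := (Nat.div_pos (Nat.divisor_le hd) (Nat.pos_of_mem_divisors hd)).ne'
  simp [ofDivisor, this]

lemma exists_eq_ofDivisor {n d : ℕ} {p : n.Partition} (h : p.parts.toFinset = {d}) :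
    ∃ hd : d ∈ n.divisors, p = ofDivisor hd := by
  have hparts : p.parts = Multiset.replicate (Multiset.card p.parts) d :=
    Multiset.eq_replicate_card.2 fun b hb => by simpa [h] using Multiset.mem_toFinset.2 hb
  have hdmem : d ∈ p.parts := Multiset.mem_toFinset.1 (h ▸ mem_singleton_self d)
  have hsum : Multiset.card p.parts * d = n := by
    have := p.parts_sum
    rwa [hparts, Multiset.sum_replicate, smul_eq_mul] at this
  have hd0 : 0 < d := p.parts_pos hdmem
  have hn : n ≠ 0 := (hd0.trans_le (le_of_mem_parts hdmem)).ne'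
  have hcard : n / d = Multiset.card p.parts := Nat.div_eq_of_eq_mul_left hd0 hsum.symm
  refine ⟨Nat.mem_divisors.2 ⟨Dvd.intro_left _ hsum, hn⟩, Nat.Partition.ext ?_⟩
  change p.parts = Multiset.replicate (n / d) d
  rwa [hcard]

theorem card_filter_card_parts_toFinset_eq_one (n : ℕ) :
    #{p : n.Partition | #p.parts.toFinset = 1} = #n.divisors := by
  symm
  refine card_bij (fun d hd => ofDivisor hd) (fun d hd => by simp [ofDivisor_parts_toFinset])
    (fun d₁ hd₁ d₂ hd₂ h => ?_) fun p hp => ?_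
  · simpa [ofDivisor_parts_toFinset] using congrArg (·.parts.toFinset) h
  · obtain ⟨d, hd⟩ := card_eq_one.1 (mem_filter.1 hp).2
    obtain ⟨hmem, rfl⟩ := exists_eq_ofDivisor hd
    exact ⟨d, hmem, rfl⟩

lemma card_parts_toFinset_ne_zero {n : ℕ} (hn : n ≠ 0) (p : n.Partition) :
    #p.parts.toFinset ≠ 0 := by
  intro h
  rw [Finset.card_eq_zero, Multiset.toFinset_eq_empty] at h
  exact hn (by rw [← p.parts_sum, h, Multiset.sum_zero])

end Nat.Partition

lemma ZMod.two_pow_eq_ite {k : ℕ} (hk : k ≠ 0) : (2 : ZMod 4) ^ k = if k = 1 then 2 else 0 := by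
  obtain _ | _ | k := k
  · contradiction
  · rfl
  · simp [pow_succ, mul_assoc, show (2 : ZMod 4) * 2 = 0 by decide]

lemma overpartitionCount_zero : overpartitionCount 0 = 1 := by
  simp [overpartitionCount]

theorem natCast_overpartitionCount {n : ℕ} (hn : n ≠ 0) :
    (overpartitionCount n : ZMod 4) = 2 * #n.divisors := by
  rw [← Nat.Partition.card_filter_card_parts_toFinset_eq_one, overpartitionCount, Nat.cast_sum]
  simp [ZMod.two_pow_eq_ite (Nat.Partition.card_parts_toFinset_ne_zero hn _), sum_ite, mul_comm]

theorem natCast_overpartitionTuples (t : ℕ) {n : ℕ} (hn : n ≠ 0) :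
    (overpartitionTuples t n : ZMod 4) = t * overpartitionCount n := by
  have hf (a b : ℕ) (ha : a ≠ 0) (hb : b ≠ 0) :
      (overpartitionCount a : ZMod 4) * overpartitionCount b = 0 := by
    rw [natCast_overpartitionCount ha, natCast_overpartitionCount hb, mul_mul_mul_comm,
      show (2 : ZMod 4) * 2 = 0 by decide, zero_mul]
  rw [overpartitionTuples, Nat.cast_sum]
  simp_rw [Nat.cast_prod]
  rw [sum_antidiagonalTuple_prod_eq_nsmul (by simp [overpartitionCount_zero]) hf t hn,
    nsmul_eq_mul]

theorem overpartitionTuples_pow_two_dichotomy_mod_four (t α n : ℕ) :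
    ((Odd t ∧ ∃ k : ℕ, n = k * (k + 1) / 2) →
      overpartitionTuples t (2 ^ (2 * α + 3) * n + 2 ^ (2 * α)) ≡ 2 [MOD 4]) ∧
    (¬ (Odd t ∧ ∃ k : ℕ, n = k * (k + 1) / 2) →
      overpartitionTuples t (2 ^ (2 * α + 3) * n + 2 ^ (2 * α)) ≡ 0 [MOD 4]) := by
  set N := 2 ^ (2 * α + 3) * n + 2 ^ (2 * α)
  have hN : N ≠ 0 := by positivity
  have hN_eq : N = 2 ^ α * 2 ^ α * (8 * n + 1) := by ring
  have hmod : overpartitionTuples t N ≡ 2 * (t * #N.divisors) [MOD 4] := by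
    rw [← ZMod.natCast_eq_natCast_iff, natCast_overpartitionTuples t hN,
      natCast_overpartitionCount hN]
    push_cast
    ring
  have hodd : Odd (t * #N.divisors) ↔ Odd t ∧ ∃ k, n = k * (k + 1) / 2 := by
    rw [Nat.odd_mul, Nat.odd_card_divisors_iff hN, hN_eq,
      Nat.isSquare_mul_self_mul_iff (by positivity), Nat.isSquare_eight_mul_add_one_iff]
  exact ⟨fun h => hmod.trans (Nat.two_mul_modEq_four_of_odd (hodd.2 h)),
    fun h => hmod.trans (Nat.two_mul_modEq_four_of_even (Nat.not_odd_iff_even.1 (mt hodd.1 h)))⟩
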